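/- Let A be a set of positive integers with upper Banach density δ(A) = 1. For every sequence (ℓ_j)_{j=1}^∞ of positive integers there exists a sequence (b_j)_{j=1}^∞ of positive integers such that b_{j+1} ≥ b_j + ℓ_j for all j ∈ ℕ, and for every nonempty finite set J of positive integers the sumset ∑_{j∈J} [b_j, b_j + ℓ_j − 1] is contained in A. -/

import Mathlib

open Filter Set

/-- `bF A n = max_{u ∈ ℕ₀} |A ∩ [u, u+n-1]|`. -/
noncomputable def bF (A : Set ℕ) (n : ℕ) : ℕ :=
  ⨆ u : ℕ, (A ∩ Set.Icc u (u + n - 1)).ncard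

/-- Upper Banach density `δ(A) = limsup_{n→∞} bF A n / n`. -/
noncomputable def ubd (A : Set ℕ) : ℝ :=
  Filter.limsup (fun n : ℕ => (bF A n : ℝ) / n) Filter.atTop

/-- The sumset `∑_{i ∈ I} B i = { ∑_{i∈I} a i : a i ∈ B i for each i ∈ I }`. -/
def sumset (B : ℕ → Set ℕ) (I : Finset ℕ) : Set ℕ :=
  {s : ℕ | ∃ a : ℕ → ℕ, (∀ i ∈ I, a i ∈ B i) ∧ s = ∑ i ∈ I, a i}

/-!
Density one forces `A` to contain arbitrarily long intervals arbitrarily far out: otherwise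
every window of length `L` misses `A`, so `A` has at most `n - ⌊n / L⌋` points in any window
of length `n`, and `δ(A) ≤ 1 - 1 / (2L)`. Writing `T j = ∑_{i<j} (b i + l i)`, choose `b j > T j`
such that `[b j, b j + l j - 1 + T j] ⊆ A`. A sum over `J` whose largest index is `j` lies in
exactly this interval, and `b (j+1) > T (j+1) ≥ b j + l j` gives the spacing.
-/

section Density

variable {A : Set ℕ} {L : ℕ}

lemma ncard_inter_Ico_le_mul_add (hA : ∀ u, ¬ Ico u (u + L) ⊆ A) (k r u : ℕ) :
    (A ∩ Ico u (u + (k * L + r))).ncard ≤ k * (L - 1) + r := by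
  induction k generalizing u with
  | zero =>
    simpa using ncard_le_ncard inter_subset_right (finite_Ico u (u + r))
  | succ k ih =>
    have hblock : (A ∩ Ico u (u + L)).ncard ≤ L - 1 := by
      have hlt := ncard_lt_ncard (ssubset_of_subset_not_subset inter_subset_right
        fun h => hA u (h.trans inter_subset_left)) (finite_Ico u (u + L))
      rw [ncard_Ico_nat] at hlt
      omega
    have hsplit : Ico u (u + ((k + 1) * L + r)) =
        Ico u (u + L) ∪ Ico (u + L) (u + L + (k * L + r)) := by
      rw [Ico_union_Ico_eq_Ico (by omega) (by omega)]
      congr 1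
      ring
    calc (A ∩ Ico u (u + ((k + 1) * L + r))).ncard
        ≤ (A ∩ Ico u (u + L)).ncard + (A ∩ Ico (u + L) (u + L + (k * L + r))).ncard := by
          rw [hsplit, inter_union_distrib_left]
          exact ncard_union_le _ _
      _ ≤ (L - 1) + (k * (L - 1) + r) := add_le_add hblock (ih (u + L))
      _ = (k + 1) * (L - 1) + r := by ring

lemma bF_le_sub_div (hL : 0 < L) (hA : ∀ u, ¬ Ico u (u + L) ⊆ A) {n : ℕ} (hn : 0 < n) :
    bF A n ≤ n - n / L := by
  refine ciSup_le fun u => ?_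
  have hIcc : A ∩ Icc u (u + n - 1) ⊆ A ∩ Ico u (u + (n / L * L + n % L)) := by
    rw [Nat.div_add_mod']
    exact inter_subset_inter_right _ fun x hx => ⟨hx.1, by have := hx.2; omega⟩
  have hcount := (ncard_le_ncard hIcc ((finite_Ico _ _).inter_of_right A)).trans
    (ncard_inter_Ico_le_mul_add hA (n / L) (n % L) u)
  have hn_eq : n / L * (L - 1) + n % L = n - n / L := by
    have := Nat.div_add_mod' n L
    have : n / L * (L - 1) + n / L = n / L * L := by
      rw [← Nat.mul_add_one, Nat.sub_add_cancel hL]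
    omega
  omega

lemma cast_sub_div_div_le (hL : 0 < L) {n : ℕ} (hLn : L ≤ n) :
    ((n - n / L : ℕ) : ℝ) / n ≤ 1 - 1 / (2 * L) := by
  have hmul : n ≤ 2 * L * (n / L) := by
    have := Nat.lt_mul_div_succ n hL
    have := Nat.div_pos hLn hL
    nlinarith
  have hn : (0 : ℝ) < n := by exact_mod_cast hL.trans_le hLn
  have hmulr : (n : ℝ) ≤ 2 * L * (n / L : ℕ) := by exact_mod_cast hmul
  have hdiv : (n : ℝ) / (2 * L) ≤ (n / L : ℕ) := by
    rw [div_le_iff₀ (by positivity)]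
    linarith
  rw [Nat.cast_sub (Nat.div_le_self n L), div_le_iff₀ hn]
  have : (1 - 1 / (2 * L)) * (n : ℝ) = n - n / (2 * L) := by ring
  linarith

lemma ubd_lt_one (hL : 0 < L) (hA : ∀ u, ¬ Ico u (u + L) ⊆ A) : ubd A < 1 := by
  have hcobdd : IsCoboundedUnder (· ≤ ·) atTop (fun n : ℕ => (bF A n : ℝ) / n) :=
    isCoboundedUnder_le_of_le atTop fun n => by positivity
  have hle : ubd A ≤ 1 - 1 / (2 * L) := by
    refine limsup_le_of_le hcobdd (eventually_atTop.2 ⟨L, fun n hn => ?_⟩)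
    calc (bF A n : ℝ) / n ≤ ((n - n / L : ℕ) : ℝ) / n := by
          gcongr
          exact bF_le_sub_div hL hA (hL.trans_le hn)
      _ ≤ 1 - 1 / (2 * L) := cast_sub_div_div_le hL hn
  have : (0 : ℝ) < 1 / (2 * L) := by positivity
  linarith

lemma exists_Icc_subset_of_ubd_eq_one (hA : ubd A = 1) (L B : ℕ) :
    ∃ u, B < u ∧ Icc u (u + L) ⊆ A := by
  obtain ⟨v, hv⟩ : ∃ v, Ico v (v + (B + L + 2)) ⊆ A := by
    by_contra! h
    exact (ubd_lt_one (by omega) h).ne hA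
  exact ⟨v + B + 1, by omega, fun x hx => hv ⟨by grind, by grind⟩⟩

end Density

lemma sumset_Icc_subset_Icc {b l : ℕ → ℕ} {J : Finset ℕ} {j : ℕ} (hj : j ∈ J)
    (hJ : ∀ i ∈ J, i ≤ j) :
    sumset (fun i => Icc (b i) (b i + l i - 1)) J ⊆
      Icc (b j) (b j + l j - 1 + ∑ i ∈ Finset.range j, (b i + l i)) := by
  rintro _ ⟨a, ha, rfl⟩
  have hrest : ∑ i ∈ J.erase j, a i ≤ ∑ i ∈ Finset.range j, (b i + l i) :=
    calc ∑ i ∈ J.erase j, a i ≤ ∑ i ∈ J.erase j, (b i + l i) :=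
          Finset.sum_le_sum fun i hi => by have := (ha i (Finset.mem_of_mem_erase hi)).2; omega
      _ ≤ ∑ i ∈ Finset.range j, (b i + l i) :=
          Finset.sum_le_sum_of_subset fun i hi => Finset.mem_range.2 <|
            lt_of_le_of_ne (hJ i (Finset.mem_of_mem_erase hi)) (Finset.ne_of_mem_erase hi)
  rw [← Finset.add_sum_erase J a hj]
  have := ha j hj
  constructor <;> grind

/-- `∑_{i<j} (b i + l i)` for `b j = pick j (prefixSumRec pick l j)`: recursing on the prefix
sums rather than on `b` avoids a strong recursion. -/
def prefixSumRec (pick : ℕ → ℕ → ℕ) (l : ℕ → ℕ) : ℕ → ℕ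
  | 0 => 0
  | j + 1 => prefixSumRec pick l j + pick j (prefixSumRec pick l j) + l j

lemma exists_eq_pick_sum_range (pick : ℕ → ℕ → ℕ) (l : ℕ → ℕ) :
    ∃ b : ℕ → ℕ, ∀ j, b j = pick j (∑ i ∈ Finset.range j, (b i + l i)) := by
  refine ⟨fun j => pick j (prefixSumRec pick l j), fun j => congrArg (pick j) ?_⟩
  induction j with
  | zero => rfl
  | succ j ih => rw [Finset.sum_range_succ, ← ih, prefixSumRec, add_assoc]

theorem interval_sumset_theorem_general (A : Set ℕ)
    (hA : ubd A = 1) (l : ℕ → ℕ) :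
    ∃ b : ℕ → ℕ, (∀ j, 0 < b j) ∧ (∀ j, b j + l j ≤ b (j + 1)) ∧
      ∀ J : Finset ℕ, J.Nonempty →
        sumset (fun j => Set.Icc (b j) (b j + l j - 1)) J ⊆ A := by
  choose next hnext_gt hnext_sub using exists_Icc_subset_of_ubd_eq_one hA
  obtain ⟨b, hb⟩ := exists_eq_pick_sum_range (fun j T => next (l j - 1 + T) T) l
  have hb_gt (j : ℕ) : ∑ i ∈ Finset.range j, (b i + l i) < b j := hb j ▸ hnext_gt _ _
  refine ⟨b, fun j => Nat.zero_lt_of_lt (hb_gt j), fun j => ?_, fun J hJ => ?_⟩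
  · have := hb_gt (j + 1)
    rw [Finset.sum_range_succ] at this
    omega
  · refine (sumset_Icc_subset_Icc (J.max'_mem hJ) (J.le_max' · ·)).trans ?_
    rw [hb (J.max' hJ)]
    exact (Icc_subset_Icc_right (by omega)).trans (hnext_sub _ _)

theorem interval_sumset_theorem (A : Set ℕ) (hApos : ∀ a ∈ A, 0 < a)
    (hA : ubd A = 1) (l : ℕ → ℕ) (hl : ∀ j, 0 < l j) :
    ∃ b : ℕ → ℕ, (∀ j, 0 < b j) ∧ (∀ j, b j + l j ≤ b (j + 1)) ∧
      ∀ J : Finset ℕ, J.Nonempty →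
        sumset (fun j => Set.Icc (b j) (b j + l j - 1)) J ⊆ A :=
  interval_sumset_theorem_general A hA l
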